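/- arXiv:2209.10415 — 2 statements merged into one kernel-verified Lean document; each statement's English description precedes it below -/
import Mathlib

section
/- Let η : ℝ → ℝ be a nonnegative smooth even function supported in (-1,1) with ∫_ℝ η = 1, and for 0 < ε < 1 set η_ε(x) = η(x/ε)/ε. Define φ_T(x) = 2·cosh(x/2)·𝟙_{[-T,T]}(x) and its mollification φ_T^ε = φ_T * η_ε. Then for all x > 0 and all T > ε one has (1/cosh(ε/2))·φ_{T-ε}^ε(x) ≤ φ_T(x) ≤ φ_{T+ε}^ε(x). -/
open MeasureTheory Real

/-- Mollified truncated cosh: for a nonnegative smooth even mollifier `η` supported in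
`(-1,1)` with unit integral, setting `η_ε(x) = η(x/ε)/ε`,
`φ_T(x) = 2 cosh(x/2) 𝟙_{[-T,T]}(x)` and `φ_T^ε = φ_T * η_ε`, then for all `x > 0` and
`T > ε` one has `(1/cosh(ε/2)) φ_{T-ε}^ε(x) ≤ φ_T(x) ≤ φ_{T+ε}^ε(x)`. -/
theorem mollified_cosh_sandwich
    (η : ℝ → ℝ) (hsmooth : ContDiff ℝ (⊤ : ℕ∞) η) (hnn : ∀ x, 0 ≤ η x)
    (heven : ∀ x, η (-x) = η x)
    (hsupp : Function.support η ⊆ Set.Ioo (-1 : ℝ) 1)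
    (hint : ∫ x, η x = 1)
    (ε : ℝ) (hε : 0 < ε) (hε1 : ε < 1) :
    let ηε : ℝ → ℝ := fun y => η (y / ε) / ε
    let φ : ℝ → ℝ → ℝ := fun T x =>
      Set.indicator (Set.Icc (-T) T) (fun y => 2 * Real.cosh (y / 2)) x
    let φε : ℝ → ℝ → ℝ := fun T x => ∫ y, φ T (x - y) * ηε y
    ∀ x T : ℝ, 0 < x → ε < T →
      (1 / Real.cosh (ε / 2)) * φε (T - ε) x ≤ φ T x ∧ φ T x ≤ φε (T + ε) x := by
  intro ηε φ φε x T hx hT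
  -- Basic properties of ηε
  have hηε_cont : Continuous ηε :=
    (hsmooth.continuous.comp (continuous_id.div_const ε)).div_const ε
  have hηε_nn : ∀ y, 0 ≤ ηε y := fun y => div_nonneg (hnn _) hε.le
  have hηε_supp : ∀ y, ε ≤ |y| → ηε y = 0 := by
    intro y hy
    have : η (y / ε) = 0 := by
      by_contra h
      have := hsupp h
      rw [Set.mem_Ioo] at this
      have habs : |y / ε| < 1 := abs_lt.2 this
      rw [abs_div, abs_of_pos hε, div_lt_one hε] at habs
      linarith
    simp [ηε, this]
  have hηε_cs : HasCompactSupport ηε := by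
    apply HasCompactSupport.intro (isCompact_Icc (a := -ε) (b := ε))
    intro y hy
    apply hηε_supp
    rw [Set.mem_Icc, not_and_or] at hy
    rcases hy with h | h
    · rw [abs_of_neg (by linarith)]; linarith
    · rw [abs_of_pos (by linarith)]; linarith
  have hηε_int : Integrable ηε := hηε_cont.integrable_of_hasCompactSupport hηε_cs
  have hηε_int1 : ∫ y, ηε y = 1 := by
    have := MeasureTheory.Measure.integral_comp_div (fun y => η y) ε
    simp only [smul_eq_mul] at this
    calc ∫ y, ηε y = (∫ y, η (y / ε)) / ε := by
          simp only [ηε]; rw [integral_div]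
      _ = |ε| * (∫ y, η y) / ε := by rw [this]
      _ = 1 := by rw [abs_of_pos hε, hint]; field_simp
  have hηε_even : ∀ y, ηε (-y) = ηε y := by
    intro y; simp only [ηε, neg_div, heven]
  -- integrability of cosh * ηε type functions
  have hcosh_int : ∀ c : ℝ, Integrable (fun y => Real.cosh ((c - y) / 2) * ηε y) := by
    intro c
    apply Continuous.integrable_of_hasCompactSupport
    · exact (Real.continuous_cosh.comp ((continuous_const.sub continuous_id).div_const 2)).mul
        hηε_cont
    · exact hηε_cs.mul_left
  have hcosh_int' : Integrable (fun y => Real.cosh (y / 2) * ηε y) := by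
    apply Continuous.integrable_of_hasCompactSupport
    · exact (Real.continuous_cosh.comp (continuous_id.div_const 2)).mul hηε_cont
    · exact hηε_cs.mul_left
  -- J := ∫ cosh(y/2) ηε(y) dy, with 1 ≤ J ≤ cosh(ε/2)
  set J : ℝ := ∫ y, Real.cosh (y / 2) * ηε y with hJdef
  have hJ1 : 1 ≤ J := by
    rw [← hηε_int1]
    apply integral_mono hηε_int hcosh_int'
    intro y
    have h1 : 1 ≤ Real.cosh (y / 2) := Real.one_le_cosh _
    nlinarith [hηε_nn y]
  have hJ2 : J ≤ Real.cosh (ε / 2) := by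
    have : J ≤ ∫ y, Real.cosh (ε / 2) * ηε y := by
      apply integral_mono hcosh_int' (hηε_int.const_mul _)
      intro y
      rcases le_or_gt ε |y| with h | h
      · simp [hηε_supp y h]
      · have : Real.cosh (y / 2) ≤ Real.cosh (ε / 2) := by
          rw [Real.cosh_le_cosh]
          rw [abs_div, abs_div, abs_of_pos hε, abs_of_pos (by norm_num : (0:ℝ) < 2)]
          exact div_le_div_of_nonneg_right h.le (by norm_num) |>.trans_eq rfl
        exact mul_le_mul_of_nonneg_right this (hηε_nn y)
    rwa [integral_const_mul, hηε_int1, mul_one] at this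
  have hJpos : 0 < J := lt_of_lt_of_le one_pos hJ1
  -- key identity: ∫ cosh((x-y)/2) ηε y dy = cosh(x/2) * J
  have key : ∀ c : ℝ, ∫ y, Real.cosh ((c - y) / 2) * ηε y = Real.cosh (c / 2) * J := by
    intro c
    have hA : (∫ y, Real.cosh ((c - y) / 2) * ηε y)
        = ∫ y, Real.cosh ((c + y) / 2) * ηε y := by
      rw [← MeasureTheory.integral_neg_eq_self (fun y => Real.cosh ((c + y) / 2) * ηε y)]
      congr 1; funext y
      rw [hηε_even]; ring_nf
    have hsum : (∫ y, Real.cosh ((c - y) / 2) * ηε y) + (∫ y, Real.cosh ((c + y) / 2) * ηε y)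
        = ∫ y, 2 * (Real.cosh (c / 2) * Real.cosh (y / 2)) * ηε y := by
      rw [← integral_add (hcosh_int c)]
      · congr 1; funext y
        have : Real.cosh ((c - y) / 2) + Real.cosh ((c + y) / 2)
            = 2 * (Real.cosh (c / 2) * Real.cosh (y / 2)) := by
          have h1 : (c + y) / 2 = c / 2 + y / 2 := by ring
          have h2 : (c - y) / 2 = c / 2 - y / 2 := by ring
          rw [h1, h2, Real.cosh_add, Real.cosh_sub]; ring
        rw [← this]; ring
      · have := hcosh_int (-c)
        have heq : (fun y => Real.cosh ((-c - y) / 2) * ηε y)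
            = (fun y => Real.cosh ((c + y) / 2) * ηε y) := by
          funext y
          have : (-c - y) / 2 = -((c + y) / 2) := by ring
          rw [this, Real.cosh_neg]
        rwa [heq] at this
    have hrhs : (∫ y, 2 * (Real.cosh (c / 2) * Real.cosh (y / 2)) * ηε y)
        = 2 * Real.cosh (c / 2) * J := by
      rw [hJdef, ← integral_const_mul]
      congr 1; funext y; ring
    rw [← hA] at hsum
    rw [hrhs] at hsum
    linarith
  -- properties of φ
  have hφ_nn : ∀ S z, 0 ≤ φ S z := by
    intro S z
    apply Set.indicator_nonneg
    intro y _
    positivity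
  have hφ_le : ∀ S z, φ S z ≤ 2 * Real.cosh (z / 2) := by
    intro S z
    apply Set.indicator_le_self' 
    intro y _
    positivity
  have hφ_meas : ∀ S : ℝ, Measurable (φ S) := by
    intro S
    exact (measurable_const.mul (Real.measurable_cosh.comp (measurable_id.div_const 2))).indicator
      measurableSet_Icc
  -- integrability of y ↦ φ S (x - y) * ηε y
  have hφconv_int : ∀ S : ℝ, 0 ≤ S → Integrable (fun y => φ S (x - y) * ηε y) := by
    intro S hS
    apply MeasureTheory.Integrable.bdd_mul (c := 2 * Real.cosh (S / 2)) hηε_int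
    · exact ((hφ_meas S).comp (measurable_const.sub measurable_id)).aestronglyMeasurable
    · refine Filter.Eventually.of_forall (fun y => ?_)
      rw [Real.norm_eq_abs, abs_of_nonneg (hφ_nn _ _)]
      by_cases h : x - y ∈ Set.Icc (-S) S
      · rw [show φ S (x - y) = 2 * Real.cosh ((x - y) / 2) from Set.indicator_of_mem h _]
        have : Real.cosh ((x - y) / 2) ≤ Real.cosh (S / 2) := by
          rw [Real.cosh_le_cosh]
          rw [Set.mem_Icc] at h
          rw [abs_div, abs_div, abs_of_nonneg hS, abs_of_pos (by norm_num : (0:ℝ) < 2)]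
          apply div_le_div_of_nonneg_right _ (by norm_num)
          rw [abs_le]; exact h
        linarith
      · rw [show φ S (x - y) = 0 from Set.indicator_of_notMem h _]
        positivity
  constructor
  · -- lower bound: (1/cosh(ε/2)) * φε (T-ε) x ≤ φ T x
    rw [div_mul_eq_mul_div, one_mul, div_le_iff₀ (Real.cosh_pos _)]
    rcases le_or_gt x T with hxT | hxT
    · -- x ∈ (0, T]: φ T x = 2 cosh(x/2)
      have hφTx : φ T x = 2 * Real.cosh (x / 2) := by
        apply Set.indicator_of_mem
        rw [Set.mem_Icc]; constructor <;> linarith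
      have h1 : φε (T - ε) x ≤ ∫ y, 2 * Real.cosh ((x - y) / 2) * ηε y := by
        apply integral_mono (hφconv_int (T - ε) (by linarith))
        · have : Integrable (fun y => 2 * (Real.cosh ((x - y) / 2) * ηε y)) :=
            (hcosh_int x).const_mul 2
          simpa [mul_assoc] using this
        · intro y
          exact mul_le_mul_of_nonneg_right (hφ_le _ _) (hηε_nn y)
      have h2 : (∫ y, 2 * Real.cosh ((x - y) / 2) * ηε y) = 2 * Real.cosh (x / 2) * J := by
        have h3 : (∫ y, 2 * Real.cosh ((x - y) / 2) * ηε y)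
            = 2 * ∫ y, Real.cosh ((x - y) / 2) * ηε y := by
          rw [← integral_const_mul]; congr 1; funext y; ring
        rw [h3, key x]; ring
      calc φε (T - ε) x ≤ 2 * Real.cosh (x / 2) * J := h1.trans_eq h2
        _ ≤ 2 * Real.cosh (x / 2) * Real.cosh (ε / 2) := by
            apply mul_le_mul_of_nonneg_left hJ2; positivity
        _ = φ T x * Real.cosh (ε / 2) := by rw [hφTx]
    · -- x > T: both sides are 0
      have hφTx : φ T x = 0 := by
        apply Set.indicator_of_notMem
        rw [Set.mem_Icc]; intro ⟨_, h⟩; linarith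
      have hzero : φε (T - ε) x = 0 := by
        have : (fun y => φ (T - ε) (x - y) * ηε y) = fun _ => (0 : ℝ) := by
          funext y
          rcases le_or_gt ε |y| with h | h
          · rw [hηε_supp y h, mul_zero]
          · have hy : y < ε := lt_of_le_of_lt (le_abs_self y) h
            have : φ (T - ε) (x - y) = 0 := by
              apply Set.indicator_of_notMem
              rw [Set.mem_Icc]; intro ⟨_, h2⟩; linarith
            rw [this, zero_mul]
        simp only [φε, this, integral_zero]
      rw [hφTx, hzero]; simp
  · -- upper bound: φ T x ≤ φε (T + ε) x
    rcases le_or_gt x T with hxT | hxT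
    · have hφTx : φ T x = 2 * Real.cosh (x / 2) := by
        apply Set.indicator_of_mem
        rw [Set.mem_Icc]; constructor <;> linarith
      have heq : φε (T + ε) x = 2 * Real.cosh (x / 2) * J := by
        have hpt : (fun y => φ (T + ε) (x - y) * ηε y)
            = fun y => 2 * Real.cosh ((x - y) / 2) * ηε y := by
          funext y
          rcases le_or_gt ε |y| with h | h
          · rw [hηε_supp y h, mul_zero, mul_zero]
          · have hy1 : -ε < y := neg_lt_of_abs_lt h
            have hy2 : y < ε := lt_of_abs_lt h
            congr 1
            apply Set.indicator_of_mem
            rw [Set.mem_Icc]; constructor <;> linarith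
        have h3 : (∫ y, 2 * Real.cosh ((x - y) / 2) * ηε y)
            = 2 * ∫ y, Real.cosh ((x - y) / 2) * ηε y := by
          rw [← integral_const_mul]; congr 1; funext y; ring
        rw [show φε (T + ε) x = ∫ y, φ (T + ε) (x - y) * ηε y from rfl, hpt, h3, key x]; ring
      rw [hφTx, heq]
      nlinarith [Real.cosh_pos (x := x / 2)]
    · have hφTx : φ T x = 0 := by
        apply Set.indicator_of_notMem
        rw [Set.mem_Icc]; intro ⟨_, h⟩; linarith
      rw [hφTx]
      apply integral_nonneg
      intro y
      exact mul_nonneg (hφ_nn _ _) (hηε_nn y)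
end

section
/- For a single positive real ℓ ≤ 2·arcsinh(1) and any T > 0, the sum Σ_{k=1}^{⌊T/ℓ⌋} 2ℓ/(e^{kℓ} − 1) is bounded above by C·(1 + max{1, ln(1/ℓ)}) for some universal constant C > 0. -/
open Real Finset

lemma short_geo_arsinh_le : Real.arsinh 1 ≤ 3/2 := by
  rw [Real.arsinh]
  have hs : Real.sqrt (1 + 1^2) ≤ 3/2 := by
    rw [show (1:ℝ)+1^2 = 2 by norm_num]
    nlinarith [Real.sq_sqrt (by norm_num : (2:ℝ) ≥ 0), Real.sqrt_nonneg (2:ℝ)]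
  calc Real.log (1 + Real.sqrt (1+1^2)) ≤ (1 + Real.sqrt (1+1^2)) - 1 :=
        Real.log_le_sub_one_of_pos (by positivity)
    _ ≤ 3/2 := by linarith

/-- For `0 < ℓ ≤ 2 arcsinh 1` and any `T > 0`,
`Σ_{k=1}^{⌊T/ℓ⌋} 2ℓ/(e^{kℓ} − 1) ≤ C (1 + max{1, ln(1/ℓ)})` for a universal constant `C`. -/
theorem short_geodesic_iterate_sum_bound :
    ∃ C : ℝ, 0 < C ∧ ∀ (ℓ T : ℝ), 0 < ℓ → ℓ ≤ 2 * Real.arsinh 1 → 0 < T →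
      ∑ k ∈ Finset.Icc 1 ⌊T / ℓ⌋₊, 2 * ℓ / (Real.exp ((k : ℝ) * ℓ) - 1) ≤
        C * (1 + max 1 (Real.log (1 / ℓ))) := by
  refine ⟨120, by norm_num, fun ℓ T hℓ hℓ2 hT => ?_⟩
  have hℓ3 : ℓ ≤ 3 := by
    have := short_geo_arsinh_le; linarith
  set N := ⌊T / ℓ⌋₊ with hN
  set M := ⌈1 / ℓ⌉₊ with hMdef
  have h1ℓ : 0 < 1 / ℓ := by positivity
  have hM1 : 1 ≤ M := Nat.one_le_iff_ne_zero.mpr (by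
    simp only [hMdef, ne_eq, Nat.ceil_eq_zero, not_le]; exact h1ℓ)
  have hMge : 1 / ℓ ≤ (M : ℝ) := Nat.le_ceil _
  have hMl : 1 ≤ (M : ℝ) * ℓ := by
    have := mul_le_mul_of_nonneg_right hMge hℓ.le
    rwa [one_div, inv_mul_cancel₀ hℓ.ne'] at this
  -- positivity of denominators
  have hden : ∀ k : ℕ, 1 ≤ k → 0 < Real.exp ((k : ℝ) * ℓ) - 1 := by
    intro k hk
    have hk0 : (0:ℝ) < (k : ℝ) * ℓ := by
      have : (1:ℝ) ≤ (k:ℝ) := by exact_mod_cast hk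
      positivity
    have := Real.add_one_le_exp ((k : ℝ) * ℓ)
    linarith
  have hf0 : ∀ k : ℕ, 1 ≤ k → 0 ≤ 2 * ℓ / (Real.exp ((k : ℝ) * ℓ) - 1) := by
    intro k hk
    exact div_nonneg (by positivity) (hden k hk).le
  -- split the sum
  set f : ℕ → ℝ := fun k => 2 * ℓ / (Real.exp ((k : ℝ) * ℓ) - 1) with hf
  set K := max N M with hK
  have hsplit : ∑ k ∈ Finset.Icc 1 N, f k
      ≤ ∑ k ∈ Finset.Ioc 0 M, f k + ∑ k ∈ Finset.Ioc M K, f k := by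
    rw [Finset.sum_Ioc_consecutive f (Nat.zero_le M) (le_max_right N M)]
    rw [show Finset.Icc 1 N = Finset.Ioc 0 N from (Finset.Icc_add_one_left_eq_Ioc 0 N)]
    refine Finset.sum_le_sum_of_subset_of_nonneg
      (Finset.Ioc_subset_Ioc_right (le_max_left N M)) ?_
    intro k hk _
    exact hf0 k (Finset.mem_Ioc.mp hk).1
  -- head bound
  have hhead : ∑ k ∈ Finset.Ioc 0 M, f k ≤ 2 * (1 + Real.log M) := by
    have h1 : ∑ k ∈ Finset.Ioc 0 M, f k ≤ ∑ k ∈ Finset.Ioc 0 M, 2 * ((k:ℝ))⁻¹ := by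
      refine Finset.sum_le_sum ?_
      intro k hk
      have hk1 : 1 ≤ k := (Finset.mem_Ioc.mp hk).1
      have hk0 : (0:ℝ) < (k:ℝ) := by exact_mod_cast hk1
      have hkl : 0 < (k:ℝ) * ℓ := by positivity
      have hle : (k:ℝ) * ℓ ≤ Real.exp ((k:ℝ) * ℓ) - 1 := by
        have := Real.add_one_le_exp ((k : ℝ) * ℓ); linarith
      calc f k ≤ 2 * ℓ / ((k:ℝ) * ℓ) :=
            div_le_div_of_nonneg_left (by positivity) hkl hle
        _ = 2 * ((k:ℝ))⁻¹ := by field_simp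
    have h2 : ∑ k ∈ Finset.Ioc 0 M, 2 * ((k:ℝ))⁻¹ = 2 * (harmonic M : ℝ) := by
      rw [← Finset.mul_sum, harmonic_eq_sum_Icc]
      rw [show Finset.Icc 1 M = Finset.Ioc 0 M from (Finset.Icc_add_one_left_eq_Ioc 0 M)]
      push_cast
      ring
    have h3 := harmonic_le_one_add_log M
    calc ∑ k ∈ Finset.Ioc 0 M, f k ≤ 2 * (harmonic M : ℝ) := by rw [← h2]; exact h1
      _ ≤ 2 * (1 + Real.log M) := by linarith
  -- bound log M
  have hlogM : Real.log M ≤ 3 + max 1 (Real.log (1/ℓ)) := by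
    have hMlt : (M : ℝ) ≤ 1/ℓ + 1 := (Nat.ceil_lt_add_one h1ℓ.le).le
    have h4 : 1/ℓ + 1 ≤ 4 * (1/ℓ) := by
      have : (1:ℝ) ≤ 3 * (1/ℓ) := by
        rw [mul_one_div, le_div_iff₀ hℓ, one_mul]; exact hℓ3
      linarith
    have hMpos : (0:ℝ) < M := by exact_mod_cast hM1
    calc Real.log M ≤ Real.log (4 * (1/ℓ)) :=
          Real.log_le_log hMpos (le_trans hMlt h4)
      _ = Real.log 4 + Real.log (1/ℓ) := Real.log_mul (by norm_num) h1ℓ.ne'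
      _ ≤ 3 + max 1 (Real.log (1/ℓ)) := by
          have h5 : Real.log 4 ≤ 3 := by
            have := Real.log_le_sub_one_of_pos (show (0:ℝ) < 4 by norm_num)
            linarith
          have := le_max_right (1:ℝ) (Real.log (1/ℓ))
          linarith
  -- tail bound
  set r := Real.exp (-ℓ) with hr
  have hr0 : 0 < r := Real.exp_pos _
  have hr1 : r < 1 := Real.exp_lt_one_iff.mpr (by linarith)
  have htail : ∑ k ∈ Finset.Ioc M K, f k ≤ 108 := by
    have h1 : ∑ k ∈ Finset.Ioc M K, f k ≤ ∑ k ∈ Finset.Ioc M K, 4 * ℓ * r ^ k := by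
      refine Finset.sum_le_sum ?_
      intro k hk
      have hkM : M ≤ k := (Finset.mem_Ioc.mp hk).1.le
      have hk1 : 1 ≤ k := le_trans hM1 hkM
      have hkl1 : 1 ≤ (k:ℝ) * ℓ := by
        refine le_trans hMl (mul_le_mul_of_nonneg_right ?_ hℓ.le)
        exact_mod_cast hkM
      have hexp2 : (2:ℝ) ≤ Real.exp ((k:ℝ) * ℓ) := by
        have := Real.add_one_le_exp (1:ℝ)
        have := Real.exp_le_exp.mpr hkl1
        linarith
      have hhalf : Real.exp ((k:ℝ) * ℓ) / 2 ≤ Real.exp ((k:ℝ) * ℓ) - 1 := by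
        linarith
      have hrk : r ^ k = (Real.exp ((k:ℝ) * ℓ))⁻¹ := by
        rw [hr, ← Real.exp_nat_mul, ← Real.exp_neg]
        ring_nf
      calc f k ≤ 2 * ℓ / (Real.exp ((k:ℝ) * ℓ) / 2) :=
            div_le_div_of_nonneg_left (by positivity) (by positivity) hhalf
        _ = 4 * ℓ * r ^ k := by rw [hrk]; field_simp; ring
    have h2 : ∑ k ∈ Finset.Ioc M K, r ^ k ≤ (1 - r)⁻¹ := by
      have hsum : Summable (fun k : ℕ => r ^ k) :=
        summable_geometric_of_lt_one hr0.le hr1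
      calc ∑ k ∈ Finset.Ioc M K, r ^ k ≤ ∑' k : ℕ, r ^ k :=
            Summable.sum_le_tsum _ (fun i _ => pow_nonneg hr0.le i) hsum
        _ = (1 - r)⁻¹ := tsum_geometric_of_lt_one hr0.le hr1
    have h3 : 4 * ℓ * (1 - r)⁻¹ ≤ 108 := by
      have hlr : ℓ * r ≤ 1 - r := by
        have := Real.add_one_le_exp ℓ
        have h := mul_le_mul_of_nonneg_right this hr0.le
        rw [← Real.exp_add] at h
        simp only [hr] at h ⊢
        rw [add_neg_cancel, Real.exp_zero] at h
        nlinarith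
      have hlrpos : 0 < ℓ * r := by positivity
      have h4 : (1 - r)⁻¹ ≤ (ℓ * r)⁻¹ := by
        exact inv_anti₀ hlrpos hlr
      have h5 : 4 * ℓ * (ℓ * r)⁻¹ = 4 * r⁻¹ := by field_simp
      have h6 : r⁻¹ = Real.exp ℓ := by rw [hr, ← Real.exp_neg]; ring_nf
      have h7 : Real.exp ℓ ≤ 27 := by
        calc Real.exp ℓ ≤ Real.exp 3 := Real.exp_le_exp.mpr hℓ3
          _ = (Real.exp 1) ^ 3 := by rw [← Real.exp_nat_mul]; norm_num
          _ ≤ 3 ^ 3 := by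
              refine pow_le_pow_left₀ (Real.exp_pos 1).le ?_ 3
              linarith [Real.exp_one_lt_d9]
          _ = 27 := by norm_num
      calc 4 * ℓ * (1 - r)⁻¹ ≤ 4 * ℓ * (ℓ * r)⁻¹ := by
            have : 0 ≤ 4 * ℓ := by positivity
            exact mul_le_mul_of_nonneg_left h4 this
        _ = 4 * r⁻¹ := h5
        _ = 4 * Real.exp ℓ := by rw [h6]
        _ ≤ 108 := by linarith
    calc ∑ k ∈ Finset.Ioc M K, f k ≤ ∑ k ∈ Finset.Ioc M K, 4 * ℓ * r ^ k := h1
      _ = 4 * ℓ * ∑ k ∈ Finset.Ioc M K, r ^ k := by rw [Finset.mul_sum]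
      _ ≤ 4 * ℓ * (1 - r)⁻¹ := by
          refine mul_le_mul_of_nonneg_left h2 (by positivity)
      _ ≤ 108 := h3
  -- finish
  have hmax1 : (1:ℝ) ≤ max 1 (Real.log (1/ℓ)) := le_max_left _ _
  calc ∑ k ∈ Finset.Icc 1 N, f k
      ≤ ∑ k ∈ Finset.Ioc 0 M, f k + ∑ k ∈ Finset.Ioc M K, f k := hsplit
    _ ≤ 2 * (1 + Real.log M) + 108 := by linarith
    _ ≤ 2 * (1 + (3 + max 1 (Real.log (1/ℓ)))) + 108 := by linarith
    _ ≤ 120 * (1 + max 1 (Real.log (1/ℓ))) := by linarith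
end
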